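/- Localization of Kobayashi balls: let D ⊆ ℂⁿ be a domain and U₁ ⊆ U open sets, z ∈ D, s ∈ (0,1), r > 0. Assume (i) s·κ_{D∩U}(u;X) ≤ κ_D(u;X) for all u ∈ D ∩ U₁ and X ∈ ℂⁿ, where κ denotes the Kobayashi–Royden pseudometric, and (ii) every piecewise C¹ curve γ : [0,1] → D with γ(0) = z and Kobayashi length ∫₀¹ κ_D(γ(t); γ'(t)) dt < r stays inside U₁. Then the Kobayashi ball satisfies B^k_D(z,r) ⊆ B^k_{D∩U}(z, r/s). -/

import Mathlib

open Set Metric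

noncomputable section

/-- The inverse hyperbolic tangent. -/
def artanh (x : ℝ) : ℝ := (1 / 2) * Real.log ((1 + x) / (1 - x))

variable {n : ℕ}

/-- `ℂⁿ` as a complex Euclidean space. -/
abbrev Cn (n : ℕ) := EuclideanSpace ℂ (Fin n)

/-- The Lempert function of `D ⊆ ℂⁿ` (with values in `[0,∞]`):
`l_D(z,w) = inf { tanh⁻¹|λ| : φ : Δ → D holomorphic, φ(0) = z, φ(λ) = w }`. -/
def lempert (D : Set (Cn n)) (z w : Cn n) : ENNReal :=
  sInf {x : ENNReal | ∃ φ : ℂ → Cn n, DifferentiableOn ℂ φ (ball 0 1) ∧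
    MapsTo φ (ball 0 1) D ∧ φ 0 = z ∧
    ∃ l : ℂ, l ∈ ball (0 : ℂ) 1 ∧ φ l = w ∧ x = ENNReal.ofReal (artanh ‖l‖)}

/-- The Carathéodory pseudodistance of `D ⊆ ℂⁿ`:
`c_D(z,w) = sup { tanh⁻¹|f(w)| : f : D → Δ holomorphic, f(z) = 0 }`. -/
def cara (D : Set (Cn n)) (z w : Cn n) : ℝ :=
  sSup {x : ℝ | ∃ f : Cn n → ℂ, DifferentiableOn ℂ f D ∧ MapsTo f D (ball 0 1) ∧
    f z = 0 ∧ x = artanh ‖f w‖}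

/-- The squeezing function of `D ⊆ ℂⁿ`:
`s_D(z) = sup { r : ∃ injective holomorphic f : D → 𝔹ₙ, f(z) = 0, r𝔹ₙ ⊆ f(D) }`,
with value `0` if no such map exists. -/
def squeeze (D : Set (Cn n)) (z : Cn n) : ℝ :=
  sSup (insert (0 : ℝ) {r : ℝ | 0 < r ∧ ∃ f : Cn n → Cn n, DifferentiableOn ℂ f D ∧
    InjOn f D ∧ MapsTo f D (ball 0 1) ∧ f z = 0 ∧ ball (0 : Cn n) r ⊆ f '' D})

/-- The Fridman invariant of `D ⊆ ℂⁿ` with respect to a pseudodistance `d`: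
`h^d_D(z) = sup { tanh r : B^d_D(z,r) ⊆ g(𝔹ₙ), g : 𝔹ₙ → D injective holomorphic }`. -/
def fridman (d : Cn n → Cn n → ℝ) (D : Set (Cn n)) (z : Cn n) : ℝ :=
  sSup (insert (0 : ℝ) {x : ℝ | ∃ r : ℝ, 0 ≤ r ∧ x = Real.tanh r ∧
    ∃ g : Cn n → Cn n, DifferentiableOn ℂ g (ball 0 1) ∧ InjOn g (ball 0 1) ∧
      MapsTo g (ball 0 1) D ∧ {w ∈ D | d z w < r} ⊆ g '' ball 0 1})

/-- The Kobayashi–Royden pseudometric of `D ⊆ ℂⁿ`: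
`κ_D(z;X) = inf { |λ| : φ : Δ → D holomorphic, φ(0) = z, λ φ'(0) = X }`. -/
def kappaRoyden (D : Set (Cn n)) (z X : Cn n) : ℝ :=
  sInf {x : ℝ | ∃ φ : ℂ → Cn n, DifferentiableOn ℂ φ (ball 0 1) ∧
    MapsTo φ (ball 0 1) D ∧ φ 0 = z ∧ ∃ l : ℂ, l • fderiv ℂ φ 0 1 = X ∧ x = ‖l‖}

/-- The Kobayashi length of a curve `γ : [0,1] → D` in `D`. -/
def kobLength (D : Set (Cn n)) (γ : ℝ → Cn n) : ℝ :=
  ∫ t in (0:ℝ)..1, kappaRoyden D (γ t) (deriv γ t)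

/-- `γ` is a `C¹` curve in `D` from `z` to `w`. -/
def IsCurve (D : Set (Cn n)) (γ : ℝ → Cn n) (z w : Cn n) : Prop :=
  ContDiffOn ℝ 1 γ (Icc 0 1) ∧ MapsTo γ (Icc 0 1) D ∧ γ 0 = z ∧ γ 1 = w

/-- The Kobayashi pseudodistance of `D ⊆ ℂⁿ`, i.e. the integrated form of the
Kobayashi–Royden pseudometric. -/
def kobayashi (D : Set (Cn n)) (z w : Cn n) : ℝ :=
  sInf {L : ℝ | ∃ γ : ℝ → Cn n, IsCurve D γ z w ∧ kobLength D γ = L}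
section
variable {n : ℕ}

def kapSet (D : Set (Cn n)) (z X : Cn n) : Set ℝ :=
  {x : ℝ | ∃ φ : ℂ → Cn n, DifferentiableOn ℂ φ (ball 0 1) ∧
    MapsTo φ (ball 0 1) D ∧ φ 0 = z ∧ ∃ l : ℂ, l • fderiv ℂ φ 0 1 = X ∧ x = ‖l‖}

lemma kappaRoyden_eq (D : Set (Cn n)) (z X : Cn n) :
    kappaRoyden D z X = sInf (kapSet D z X) := rfl

lemma kapSet_nonneg {D : Set (Cn n)} {z X : Cn n} {x : ℝ} (hx : x ∈ kapSet D z X) : 0 ≤ x := by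
  obtain ⟨φ, -, -, -, l, -, rfl⟩ := hx; exact norm_nonneg l

lemma kapSet_bddBelow (D : Set (Cn n)) (z X : Cn n) : BddBelow (kapSet D z X) :=
  ⟨0, fun _ hx => kapSet_nonneg hx⟩

lemma kappaRoyden_nonneg (D : Set (Cn n)) (z X : Cn n) : 0 ≤ kappaRoyden D z X :=
  Real.sInf_nonneg (fun _ hx => kapSet_nonneg hx)

lemma kapSet_ex {D : Set (Cn n)} {u X : Cn n} {δ : ℝ} (hδ : 0 < δ)
    (hball : ball u δ ⊆ D) : ∃ x ∈ kapSet D u X, x ≤ ‖X‖ / δ := by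
  by_cases hX : X = 0
  · refine ⟨0, ⟨fun _ => u, differentiableOn_const u, fun y _ => hball (mem_ball_self hδ),
      rfl, 0, ?_, by simp⟩, by simp [hX, norm_nonneg, div_nonneg (norm_nonneg X) hδ.le]⟩
    simp [hX]
  · have hXn : (0:ℝ) < ‖X‖ := norm_pos_iff.2 hX
    set ε : ℝ := δ / ‖X‖ with hε
    have hε0 : 0 < ε := div_pos hδ hXn
    set φ : ℂ → Cn n := fun l => u + ((ε : ℂ) * l) • X with hφ
    have hder : HasDerivAt φ ((ε : ℂ) • X) 0 := by
      have h1 : HasDerivAt (fun l : ℂ => (ε : ℂ) * l) ((ε : ℂ) * 1) 0 :=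
        (hasDerivAt_id (0:ℂ)).const_mul _
      have h2 := h1.smul_const X
      have h3 := (hasDerivAt_const (0:ℂ) u).add h2
      simpa [hφ, mul_one] using h2
    refine ⟨‖X‖/δ, ⟨φ, ?_, ?_, by simp [hφ], (1/(ε:ℂ)), ?_, ?_⟩, le_refl _⟩
    · exact (differentiableOn_const u).add
        (((differentiable_id.const_mul _).differentiableOn).smul_const X)
    · intro l hl
      apply hball
      simp only [hφ, mem_ball] at hl ⊢
      have : dist (u + ((ε:ℂ) * l) • X) u = ε * ‖l‖ * ‖X‖ := by
        rw [dist_eq_norm]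
        simp [norm_smul, abs_of_pos hε0, mul_comm]
      rw [this, hε]
      calc δ / ‖X‖ * ‖l‖ * ‖X‖ = δ * ‖l‖ := by field_simp
        _ < δ * 1 := by
              have hl' : ‖l‖ < 1 := by simpa [dist_eq_norm] using hl
              exact mul_lt_mul_of_pos_left hl' hδ
        _ = δ := mul_one δ
    · have : fderiv ℂ φ 0 1 = (ε : ℂ) • X := by
        rw [fderiv_apply_one_eq_deriv]; exact hder.deriv
      rw [this, smul_smul]
      have hεne : (ε : ℂ) ≠ 0 := by exact_mod_cast hε0.ne'
      rw [one_div, inv_mul_cancel₀ hεne, one_smul]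
    · have hεne : (ε : ℝ) ≠ 0 := hε0.ne'
      rw [one_div, norm_inv, Complex.norm_real, Real.norm_eq_abs, abs_of_pos hε0, hε]
      rw [inv_div]

lemma kappaRoyden_le_of_ball {D : Set (Cn n)} {u X : Cn n} {δ : ℝ} (hδ : 0 < δ)
    (hball : ball u δ ⊆ D) : kappaRoyden D u X ≤ ‖X‖ / δ := by
  obtain ⟨x, hx, hxle⟩ := kapSet_ex hδ hball
  exact le_trans (csInf_le (kapSet_bddBelow D u X) hx) hxle

end
section
variable {n : ℕ}

set_option maxHeartbeats 1000000 in
lemma kappa_usc {D : Set (Cn n)} (hD : IsOpen D) {u X : ℝ → Cn n}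
    (hu : Continuous u) (hX : Continuous X) (humem : ∀ t, u t ∈ D) :
    UpperSemicontinuous (fun t => kappaRoyden D (u t) (X t)) := by
  intro t₀ c hc
  beta_reduce at hc ⊢
  set u₀ := u t₀ with hu₀
  set X₀ := X t₀ with hX₀
  -- extract a competitor
  obtain ⟨δ₁, hδ₁, hball₁⟩ := Metric.isOpen_iff.1 hD u₀ (humem t₀)
  have hne : (kapSet D u₀ X₀).Nonempty := by
    obtain ⟨x, hx, -⟩ := kapSet_ex hδ₁ hball₁; exact ⟨x, hx⟩
  rw [kappaRoyden_eq] at hc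
  obtain ⟨x, ⟨φ, hφd, hφm, hφ0, l, hld, rfl⟩, hxc⟩ := exists_lt_of_csInf_lt hne hc
  have hc0 : (0:ℝ) < c := lt_of_le_of_lt (norm_nonneg l) hxc
  by_cases hl0 : l = 0
  · -- X₀ = 0 case
    have hX0 : X₀ = 0 := by rw [← hld, hl0, zero_smul]
    have hev : ∀ᶠ t in nhds t₀, dist (u t) u₀ < δ₁/2 ∧ ‖X t‖ < c * (δ₁/2) := by
      have h1 : ∀ᶠ t in nhds t₀, dist (u t) u₀ < δ₁/2 :=
        Metric.tendsto_nhds.mp (hu.continuousAt (x := t₀)) (δ₁/2) (by linarith)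
      have h2 : ∀ᶠ t in nhds t₀, dist (X t) X₀ < c * (δ₁/2) :=
        Metric.tendsto_nhds.mp (hX.continuousAt (x := t₀)) (c * (δ₁/2)) (by positivity)
      filter_upwards [h1, h2] with t ht1 ht2
      refine ⟨ht1, ?_⟩
      rw [← dist_zero_right, ← hX0]
      exact ht2
    filter_upwards [hev] with t ⟨h1, h2⟩
    have hball : ball (u t) (δ₁/2) ⊆ D := by
      intro y hy
      apply hball₁
      rw [mem_ball] at hy ⊢
      calc dist y u₀ ≤ dist y (u t) + dist (u t) u₀ := dist_triangle _ _ _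
        _ < δ₁/2 + δ₁/2 := add_lt_add hy h1
        _ = δ₁ := by ring
    calc kappaRoyden D (u t) (X t) ≤ ‖X t‖ / (δ₁/2) := kappaRoyden_le_of_ball (by linarith) hball
      _ < c := (div_lt_iff₀ (by linarith)).2 h2
  · -- main case
    have hl : (0:ℝ) < ‖l‖ := norm_pos_iff.2 hl0
    set ρ : ℝ := (‖l‖/c + 1)/2 with hρ
    have hρ0 : 0 < ρ := by positivity
    have hρ1 : ρ < 1 := by
      have : ‖l‖/c < 1 := (div_lt_one hc0).2 hxc
      rw [hρ]; linarith
    have hρc : ‖l‖/ρ < c := by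
      rw [div_lt_iff₀ hρ0]
      have hrc : ρ * c = (‖l‖ + c)/2 := by
        rw [hρ]; field_simp
      rw [mul_comm, hrc]
      linarith
    have hsub : closedBall (0:ℂ) ρ ⊆ ball 0 1 := closedBall_subset_ball hρ1
    set K : Set (Cn n) := φ '' closedBall 0 ρ with hK
    have hKcomp : IsCompact K :=
      (isCompact_closedBall _ _).image_of_continuousOn ((hφd.continuousOn).mono hsub)
    have hKD : K ⊆ D := by rintro y ⟨x, hx, rfl⟩; exact hφm (hsub hx)
    obtain ⟨δ, hδ0, hthick⟩ := hKcomp.exists_thickening_subset_open hD hKD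
    have hballK : ∀ x ∈ K, ball x δ ⊆ D := by
      intro x hx y hy
      apply hthick
      rw [Metric.mem_thickening_iff]
      exact ⟨x, hx, hy⟩
    have hφat : DifferentiableAt ℂ φ 0 :=
      hφd.differentiableAt (isOpen_ball.mem_nhds (mem_ball_self one_pos))
    set dφ := deriv φ 0 with hdφ
    have hldφ : l • dφ = X₀ := by rw [hdφ, ← fderiv_apply_one_eq_deriv]; exact hld
    have hev : ∀ᶠ t in nhds t₀, dist (u t) u₀ < δ/2 ∧ ‖X t - X₀‖ < (δ/2) * (‖l‖/ρ) := by
      have h1 : ∀ᶠ t in nhds t₀, dist (u t) u₀ < δ/2 :=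
        Metric.tendsto_nhds.mp (hu.continuousAt (x := t₀)) (δ/2) (by linarith)
      have h2 : ∀ᶠ t in nhds t₀, dist (X t) X₀ < (δ/2) * (‖l‖/ρ) :=
        Metric.tendsto_nhds.mp (hX.continuousAt (x := t₀)) _ (by positivity)
      filter_upwards [h1, h2] with t ht1 ht2
      exact ⟨ht1, by rwa [dist_eq_norm] at ht2⟩
    filter_upwards [hev] with t ⟨h1, h2⟩
    set v : Cn n := ((ρ:ℂ)/l) • (X t - X₀) with hv
    have hvn : ‖v‖ < δ/2 := by
      rw [hv, norm_smul, norm_div, Complex.norm_real, Real.norm_eq_abs, abs_of_pos hρ0]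
      calc ρ/‖l‖ * ‖X t - X₀‖ < ρ/‖l‖ * ((δ/2) * (‖l‖/ρ)) := by
            apply mul_lt_mul_of_pos_left h2 (by positivity)
        _ = (δ/2) * ((ρ/ρ) * (‖l‖/‖l‖)) := by ring
        _ = δ/2 := by rw [div_self hρ0.ne', div_self hl.ne', one_mul, mul_one]
    set ψ : ℂ → Cn n := fun lam => φ ((ρ:ℂ)*lam) + ((u t - u₀) + lam • v) with hψ
    have hmul : ∀ lam : ℂ, lam ∈ ball (0:ℂ) 1 → (ρ:ℂ)*lam ∈ closedBall (0:ℂ) ρ := by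
      intro lam hlam
      rw [mem_ball, dist_zero_right] at hlam
      rw [mem_closedBall, dist_zero_right, norm_mul, Complex.norm_real, Real.norm_eq_abs,
        abs_of_pos hρ0]
      nlinarith [norm_nonneg lam]
    have hψm : MapsTo ψ (ball 0 1) D := by
      intro lam hlam
      have hmem : φ ((ρ:ℂ)*lam) ∈ K := ⟨_, hmul lam hlam, rfl⟩
      apply hballK _ hmem
      rw [mem_ball, dist_eq_norm, hψ]
      simp only [add_sub_cancel_left]
      calc ‖(u t - u₀) + lam • v‖ ≤ ‖u t - u₀‖ + ‖lam • v‖ := norm_add_le _ _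
        _ ≤ ‖u t - u₀‖ + ‖v‖ := by
            have h1n : ‖lam‖ ≤ 1 := by
              rw [mem_ball, dist_zero_right] at hlam; exact hlam.le
            have : ‖lam • v‖ ≤ ‖v‖ := by
              rw [norm_smul]
              calc ‖lam‖ * ‖v‖ ≤ 1 * ‖v‖ := mul_le_mul_of_nonneg_right h1n (norm_nonneg v)
                _ = ‖v‖ := one_mul _
            exact add_le_add_right this _
        _ < δ/2 + δ/2 := by
            rw [← dist_eq_norm]
            exact add_lt_add h1 hvn
        _ = δ := by ring
    have hψd : DifferentiableOn ℂ ψ (ball 0 1) := by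
      apply DifferentiableOn.add
      · exact hφd.comp ((differentiable_id.const_mul _).differentiableOn)
          (fun lam hlam => hsub (hmul lam hlam))
      · exact (differentiableOn_const _).add ((differentiable_id.smul_const v).differentiableOn)
    have hψ0 : ψ 0 = u t := by
      rw [hψ]; simp [hφ0]
    have hψder : HasDerivAt ψ ((ρ:ℂ) • dφ + v) 0 := by
      have h1 : HasDerivAt (fun lam : ℂ => (ρ:ℂ)*lam) ((ρ:ℂ)*1) 0 :=
        (hasDerivAt_id (0:ℂ)).const_mul _
      have h2 : HasDerivAt φ dφ ((ρ:ℂ)*(0:ℂ)) := by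
        rw [mul_zero]; exact hφat.hasDerivAt
      have h3 := HasDerivAt.scomp (0:ℂ) h2 h1
      have h4 : HasDerivAt (fun lam : ℂ => (u t - u₀) + lam • v) ((0:Cn n) + (1:ℂ) • v) 0 :=
        (hasDerivAt_const (0:ℂ) _).add ((hasDerivAt_id (0:ℂ)).smul_const v)
      have h5 := h3.add h4
      have h6 : HasDerivAt ψ (((ρ:ℂ)*1) • dφ + ((0:Cn n) + (1:ℂ) • v)) 0 := h5
      rw [mul_one, zero_add, one_smul] at h6; exact h6
    have hfd : fderiv ℂ ψ 0 1 = (ρ:ℂ) • dφ + v := by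
      rw [fderiv_apply_one_eq_deriv]; exact hψder.deriv
    have hρC : (ρ:ℂ) ≠ 0 := by exact_mod_cast hρ0.ne'
    have key : kappaRoyden D (u t) (X t) ≤ ‖l/(ρ:ℂ)‖ := by
      apply csInf_le (kapSet_bddBelow D _ _)
      refine ⟨ψ, hψd, hψm, hψ0, l/(ρ:ℂ), ?_, rfl⟩
      rw [hfd, smul_add, smul_smul, div_mul_cancel₀ _ hρC, hldφ, hv, smul_smul]
      rw [div_mul_div_comm, mul_comm l (ρ:ℂ), mul_div_mul_comm, div_self hρC,
        div_self hl0, one_mul, one_smul, add_sub_cancel]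
    calc kappaRoyden D (u t) (X t) ≤ ‖l/(ρ:ℂ)‖ := key
      _ = ‖l‖/ρ := by
          rw [norm_div, Complex.norm_real, Real.norm_eq_abs, abs_of_pos hρ0]
      _ < c := hρc

end
section
variable {n : ℕ}

/-- smooth reparametrization: 0 for t ≤ 1/3, 1 for t ≥ 2/3 -/
def rpm (t : ℝ) : ℝ := Real.smoothTransition (3*t - 1)

lemma rpm_contDiff : ContDiff ℝ 1 rpm :=
  (Real.smoothTransition.contDiff (n := 1)).comp
    ((contDiff_const.mul contDiff_id).sub contDiff_const)

lemma rpm_mem_Icc (t : ℝ) : rpm t ∈ Icc (0:ℝ) 1 :=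
  ⟨Real.smoothTransition.nonneg _, Real.smoothTransition.le_one _⟩

lemma rpm_of_le {t : ℝ} (h : t ≤ 1/3) : rpm t = 0 :=
  Real.smoothTransition.zero_of_nonpos (by linarith)

lemma rpm_of_ge {t : ℝ} (h : 2/3 ≤ t) : rpm t = 1 :=
  Real.smoothTransition.one_of_one_le (by linarith)

/-- A "nice" C¹ curve in `D` from `z` to `w`, flat near the endpoints. -/
def Nice (D : Set (Cn n)) (γ : ℝ → Cn n) (z w : Cn n) : Prop :=
  ContDiff ℝ 1 γ ∧ MapsTo γ (Icc 0 1) D ∧ (∀ t, t ≤ 1/3 → γ t = z) ∧ (∀ t, 2/3 ≤ t → γ t = w)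

lemma Nice.isCurve {D : Set (Cn n)} {γ : ℝ → Cn n} {z w : Cn n} (h : Nice D γ z w) :
    IsCurve D γ z w :=
  ⟨h.1.contDiffOn, h.2.1, h.2.2.1 0 (by norm_num), h.2.2.2 1 (by norm_num)⟩

/-- normalization -/
lemma nice_of_curve {D : Set (Cn n)} {γ : ℝ → Cn n} {z w : Cn n}
    (h1 : ContDiff ℝ 1 γ) (h2 : MapsTo γ (Icc 0 1) D) (h3 : γ 0 = z) (h4 : γ 1 = w) :
    Nice D (γ ∘ rpm) z w := by
  refine ⟨h1.comp rpm_contDiff, fun t _ => h2 (rpm_mem_Icc t), ?_, ?_⟩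
  · intro t ht; simp [Function.comp, rpm_of_le ht, h3]
  · intro t ht; simp [Function.comp, rpm_of_ge ht, h4]

/-- the nice segment curve from a to b -/
lemma nice_segment {D : Set (Cn n)} {a b : Cn n}
    (h : ∀ s : ℝ, s ∈ Icc (0:ℝ) 1 → a + s • (b - a) ∈ D) :
    Nice D (fun t => a + rpm t • (b - a)) a b := by
  refine ⟨?_, fun t _ => h _ (rpm_mem_Icc t), ?_, ?_⟩
  · exact contDiff_const.add (rpm_contDiff.smul contDiff_const)
  · intro t ht; simp [rpm_of_le ht]
  · intro t ht; simp [rpm_of_ge ht]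

/-- concatenation of nice curves -/
lemma nice_concat {D : Set (Cn n)} {γ₁ γ₂ : ℝ → Cn n} {z a w : Cn n}
    (h1 : Nice D γ₁ z a) (h2 : Nice D γ₂ a w) : ∃ γ, Nice D γ z w := by
  obtain ⟨h1c, h1m, h1l, h1r⟩ := h1
  obtain ⟨h2c, h2m, h2l, h2r⟩ := h2
  set γ : ℝ → Cn n := fun t => if t ≤ 1/2 then γ₁ (2*t) else γ₂ (2*t - 1) with hγ
  have key : ContDiff ℝ 1 γ := by
    rw [← contDiffOn_univ]
    apply contDiffOn_of_locally_contDiffOn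
    intro x _
    have hg1 : ContDiff ℝ 1 (fun t : ℝ => γ₁ (2*t)) :=
      h1c.comp (contDiff_const.mul contDiff_id)
    have hg2 : ContDiff ℝ 1 (fun t : ℝ => γ₂ (2*t - 1)) :=
      h2c.comp ((contDiff_const.mul contDiff_id).sub contDiff_const)
    by_cases hx : x < 7/12
    · refine ⟨Iio (7/12), isOpen_Iio, hx, ?_⟩
      apply ContDiffOn.congr hg1.contDiffOn
      intro t ht
      simp only [mem_inter_iff, mem_Iio] at ht
      by_cases h : t ≤ 1/2
      · simp only [hγ]; rw [if_pos h]
      · push_neg at h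
        have e1 : γ₁ (2*t) = a := h1r _ (by linarith)
        have e2 : γ₂ (2*t - 1) = a := h2l _ (by linarith [ht.2])
        simp only [hγ]
        rw [if_neg (not_le.2 h), e2, e1]
    · refine ⟨Ioi (5/12), isOpen_Ioi, by push_neg at hx; exact mem_Ioi.2 (by linarith), ?_⟩
      apply ContDiffOn.congr hg2.contDiffOn
      intro t ht
      simp only [mem_inter_iff, mem_Ioi] at ht
      by_cases h : t ≤ 1/2
      · have e1 : γ₁ (2*t) = a := h1r _ (by linarith [ht.2])
        have e2 : γ₂ (2*t - 1) = a := h2l _ (by linarith)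
        simp only [hγ]
        rw [if_pos h, e1, e2]
      · simp only [hγ]; rw [if_neg h]
  have hm : MapsTo γ (Icc 0 1) D := by
    intro t ht
    simp only [mem_Icc] at ht
    by_cases h : t ≤ 1/2
    · simp only [hγ, if_pos h]
      exact h1m ⟨by linarith [ht.1], by linarith⟩
    · push_neg at h
      simp only [hγ, if_neg (not_le.2 h)]
      exact h2m ⟨by linarith, by linarith [ht.2]⟩
  have hz : γ 0 = z := by
    simp only [hγ]
    rw [if_pos (by norm_num)]
    exact h1l _ (by norm_num)
  have hw : γ 1 = w := by
    simp only [hγ]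
    rw [if_neg (by norm_num)]
    exact h2r _ (by norm_num)
  exact ⟨γ ∘ rpm, nice_of_curve key hm hz hw⟩

/-- existence of C¹ curves in open connected sets -/
lemma exists_curve {D : Set (Cn n)} (hD : IsOpen D) (hDc : IsConnected D) {z w : Cn n}
    (hz : z ∈ D) (hw : w ∈ D) : ∃ γ, IsCurve D γ z w := by
  set A : Set (Cn n) := {w | ∃ γ, Nice D γ z w} with hA
  have hAD : A ⊆ D := by
    rintro x ⟨γ, hγ⟩
    have := hγ.2.1 (right_mem_Icc.2 (by norm_num))
    rwa [hγ.2.2.2 1 (by norm_num)] at this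
  have hseg : ∀ x ∈ D, ∀ ε > 0, ball x ε ⊆ D → ∀ y ∈ ball x ε, ∀ y' ∈ ball x ε,
      ∃ σ, Nice D σ y y' := by
    intro x hx ε hε hball y hy y' hy'
    refine ⟨_, nice_segment (fun s hs => hball ?_)⟩
    rw [mem_ball] at hy hy' ⊢
    calc dist (y + s • (y' - y)) x = ‖(1 - s) • (y - x) + s • (y' - x)‖ := by
          rw [dist_eq_norm]
          congr 1
          rw [sub_smul, one_smul, smul_sub, smul_sub, smul_sub]
          abel
      _ ≤ (1 - s) * ‖y - x‖ + s * ‖y' - x‖ := by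
          refine le_trans (norm_add_le _ _) ?_
          rw [norm_smul, norm_smul, Real.norm_eq_abs, Real.norm_eq_abs,
            abs_of_nonneg (by linarith [hs.2]), abs_of_nonneg hs.1]
      _ < (1 - s) * ε + s * ε := by
          rcases eq_or_lt_of_le hs.1 with h0 | h0
          · rcases eq_or_lt_of_le hs.2 with h1 | h1
            · exfalso; rw [← h0] at h1; norm_num at h1
            · rw [← dist_eq_norm, ← dist_eq_norm]
              have hd1 : dist y x < ε := hy
              have hd2 : dist y' x ≤ ε := le_of_lt hy'
              rcases eq_or_lt_of_le hs.2 with h1' | h1'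
              · exfalso; rw [← h0] at h1'; norm_num at h1'
              · apply add_lt_add_of_lt_of_le
                · exact mul_lt_mul_of_pos_left hd1 (by linarith)
                · exact mul_le_mul_of_nonneg_left hd2 (by rw [← h0])
          · apply add_lt_add_of_le_of_lt
            · exact mul_le_mul_of_nonneg_left (le_of_lt (by rwa [dist_eq_norm] at hy))
                (by linarith [hs.2])
            · exact mul_lt_mul_of_pos_left (by rwa [dist_eq_norm] at hy') h0
      _ = ε := by ring
  have hAopen : IsOpen A := by
    rw [Metric.isOpen_iff]
    rintro x ⟨γ, hγ⟩
    obtain ⟨ε, hε, hball⟩ := Metric.isOpen_iff.1 hD x (hAD ⟨γ, hγ⟩)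
    refine ⟨ε, hε, fun y hy => ?_⟩
    obtain ⟨σ, hσ⟩ := hseg x (hAD ⟨γ, hγ⟩) ε hε hball x (mem_ball_self hε) y hy
    exact nice_concat hγ hσ
  have hBopen : IsOpen {x | x ∈ D ∧ x ∉ A} := by
    rw [Metric.isOpen_iff]
    rintro x ⟨hxD, hxA⟩
    obtain ⟨ε, hε, hball⟩ := Metric.isOpen_iff.1 hD x hxD
    refine ⟨ε, hε, fun y hy => ⟨hball hy, fun hyA => hxA ?_⟩⟩
    obtain ⟨γ, hγ⟩ := hyA
    obtain ⟨σ, hσ⟩ := hseg x hxD ε hε hball y hy x (mem_ball_self hε)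
    exact nice_concat hγ hσ
  have hzA : z ∈ A := ⟨fun _ => z, contDiff_const, fun t _ => hz, fun _ _ => rfl, fun _ _ => rfl⟩
  have : w ∈ A := by
    by_contra hwA
    obtain ⟨p, hp⟩ := hDc.isPreconnected A {x | x ∈ D ∧ x ∉ A} hAopen hBopen
      (fun x hx => by by_cases h : x ∈ A; exact Or.inl h; exact Or.inr ⟨hx, h⟩)
      ⟨z, hz, hzA⟩ ⟨w, hw, hw, hwA⟩
    exact hp.2.2.2 hp.2.1
  obtain ⟨γ, hγ⟩ := this
  exact ⟨γ, hγ.isCurve⟩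

end
set_option maxHeartbeats 1000000



/-- localization of Kobayashi balls: let `D ⊆ ℂⁿ` be a domain,
`U₁ ⊆ U` open, `z ∈ D`, `s ∈ (0,1)`, `r > 0`. If
(i) `s·κ_{D∩U}(u;X) ≤ κ_D(u;X)` for all `u ∈ D ∩ U₁`, `X ∈ ℂⁿ`, and
(ii) every `C¹` curve `γ : [0,1] → D` with `γ(0) = z` and Kobayashi length `< r`
stays inside `U₁`, then `B^k_D(z,r) ⊆ B^k_{D∩U}(z, r/s)`. -/
theorem kobayashi_ball_localization {n : ℕ} (D U U₁ : Set (Cn n)) (hD : IsOpen D)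
    (hDconn : IsConnected D) (hU : IsOpen U) (hU₁ : IsOpen U₁) (hUU : U₁ ⊆ U)
    (z : Cn n) (hz : z ∈ D) (s r : ℝ) (hs0 : 0 < s) (hs1 : s < 1) (hr : 0 < r)
    (hmetric : ∀ u ∈ D ∩ U₁, ∀ X : Cn n,
      s * kappaRoyden (D ∩ U) u X ≤ kappaRoyden D u X)
    (hcurve : ∀ γ : ℝ → Cn n, ContDiffOn ℝ 1 γ (Icc 0 1) →
      MapsTo γ (Icc 0 1) D → γ 0 = z → kobLength D γ < r →
      MapsTo γ (Icc 0 1) U₁) :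
    {w ∈ D | kobayashi D z w < r} ⊆ {w ∈ D ∩ U | kobayashi (D ∩ U) z w < r / s} := by
  rintro w ⟨hwD, hk⟩
  have hne : {L : ℝ | ∃ γ : ℝ → Cn n, IsCurve D γ z w ∧ kobLength D γ = L}.Nonempty := by
    obtain ⟨γ, hγ⟩ := exists_curve hD hDconn hz hwD
    exact ⟨_, γ, hγ, rfl⟩
  obtain ⟨L, ⟨γ, ⟨hγC, hγD, hγ0, hγ1⟩, rfl⟩, hLr⟩ := exists_lt_of_csInf_lt hne hk
  have hU₁γ : MapsTo γ (Icc 0 1) U₁ := hcurve γ hγC hγD hγ0 hLr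
  have hwU : w ∈ U := hUU (by rw [← hγ1]; exact hU₁γ (right_mem_Icc.2 zero_le_one))
  refine ⟨⟨hwD, hwU⟩, ?_⟩
  -- clamped curve and derivative
  set c : ℝ → ℝ := fun t => max 0 (min 1 t) with hcdef
  have hcc : Continuous c := continuous_const.max (continuous_const.min continuous_id)
  have hcmem : ∀ t, c t ∈ Icc (0:ℝ) 1 :=
    fun t => ⟨le_max_left _ _, max_le zero_le_one (min_le_left _ _)⟩
  have hcid : ∀ t ∈ Ioo (0:ℝ) 1, c t = t := by
    intro t ht
    rw [hcdef]
    simp only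
    rw [min_eq_right ht.2.le, max_eq_right ht.1.le]
  set dγ : ℝ → Cn n := derivWithin γ (Icc (0:ℝ) 1) with hdγ
  have hdγcont : ContinuousOn dγ (Icc 0 1) :=
    hγC.continuousOn_derivWithin (uniqueDiffOn_Icc zero_lt_one) (le_refl 1)
  set γc : ℝ → Cn n := γ ∘ c with hγcdef
  set Xc : ℝ → Cn n := dγ ∘ c with hXcdef
  have hγcc : Continuous γc := hγC.continuousOn.comp_continuous hcc hcmem
  have hXcc : Continuous Xc := hdγcont.comp_continuous hcc hcmem
  have hmemD : ∀ t, γc t ∈ D := fun t => hγD (hcmem t)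
  have hmemDU1 : ∀ t, γc t ∈ D ∩ U₁ := fun t => ⟨hγD (hcmem t), hU₁γ (hcmem t)⟩
  set G : ℝ → ℝ := fun t => kappaRoyden D (γc t) (Xc t) with hGdef
  set F : ℝ → ℝ := fun t => kappaRoyden (D ∩ U) (γc t) (Xc t) with hFdef
  have key : ∀ t ∈ Ioo (0:ℝ) 1, γ t = γc t ∧ deriv γ t = Xc t := by
    intro t ht
    constructor
    · rw [hγcdef]; simp [hcid t ht]
    · rw [hXcdef]
      show deriv γ t = dγ (c t)
      rw [hcid t ht, hdγ, derivWithin_of_mem_nhds (Icc_mem_nhds ht.1 ht.2)]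
  have hne1 : ∀ᵐ x : ℝ, x ≠ 1 := by
    rw [Filter.eventually_iff, MeasureTheory.mem_ae_iff]
    have : {x : ℝ | x ≠ 1}ᶜ = {1} := by ext x; simp
    rw [this]
    exact Real.volume_singleton
  have hIoc : ∀ t : ℝ, t ≠ 1 → t ∈ Set.uIoc (0:ℝ) 1 → t ∈ Ioo (0:ℝ) 1 := by
    intro t ht1 htI
    rw [uIoc_of_le zero_le_one] at htI
    exact ⟨htI.1, lt_of_le_of_ne htI.2 ht1⟩
  have hGae : kobLength D γ = ∫ t in (0:ℝ)..1, G t := by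
    apply intervalIntegral.integral_congr_ae
    filter_upwards [hne1] with t ht1 htI
    obtain ⟨h1, h2⟩ := key t (hIoc t ht1 htI)
    rw [hGdef]
    simp only
    rw [h1, h2]
  have hFae : kobLength (D ∩ U) γ = ∫ t in (0:ℝ)..1, F t := by
    apply intervalIntegral.integral_congr_ae
    filter_upwards [hne1] with t ht1 htI
    obtain ⟨h1, h2⟩ := key t (hIoc t ht1 htI)
    rw [hFdef]
    simp only
    rw [h1, h2]
  -- integrability of G
  have hGmeas : Measurable G := (kappa_usc hD hγcc hXcc hmemD).measurable
  obtain ⟨δ, hδ0, hthick⟩ :=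
    ((isCompact_Icc (a := (0:ℝ)) (b := 1)).image_of_continuousOn
      hγC.continuousOn).exists_thickening_subset_open hD
      (by rintro y ⟨x, hx, rfl⟩; exact hγD hx)
  have hballs : ∀ t, ball (γc t) δ ⊆ D := by
    intro t y hy
    exact hthick (Metric.mem_thickening_iff.2 ⟨γc t, ⟨c t, hcmem t, rfl⟩, hy⟩)
  obtain ⟨M, hM⟩ := (isCompact_Icc (a := (0:ℝ)) (b := 1)).image_of_continuousOn
    hdγcont |>.exists_bound_of_continuousOn continuousOn_id
  have hGbd : ∀ t, ‖G t‖ ≤ M / δ := by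
    intro t
    rw [Real.norm_eq_abs, abs_of_nonneg (kappaRoyden_nonneg _ _ _)]
    calc G t ≤ ‖Xc t‖ / δ := kappaRoyden_le_of_ball hδ0 (hballs t)
      _ ≤ M / δ := by
          have : ‖Xc t‖ ≤ M := by
            have := hM (Xc t) ⟨c t, hcmem t, rfl⟩
            simpa using this
          gcongr
  have hGint : IntervalIntegrable G MeasureTheory.volume 0 1 := by
    constructor
    · exact MeasureTheory.Integrable.mono'
        (MeasureTheory.integrable_const (M/δ)) hGmeas.aestronglyMeasurable
        (Filter.Eventually.of_forall (fun t => hGbd t))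
    · rw [Ioc_eq_empty (by norm_num)]
      exact MeasureTheory.integrableOn_empty
  -- comparison
  have hsF : ∀ t ∈ Icc (0:ℝ) 1, s * F t ≤ G t := fun t _ => hmetric (γc t) (hmemDU1 t) (Xc t)
  have hGr : (∫ t in (0:ℝ)..1, G t) < r := by rw [← hGae]; exact hLr
  have hFlt : (∫ t in (0:ℝ)..1, F t) < r / s := by
    by_cases hFint : IntervalIntegrable F MeasureTheory.volume 0 1
    · have h1 : (∫ t in (0:ℝ)..1, s * F t) ≤ ∫ t in (0:ℝ)..1, G t :=
        intervalIntegral.integral_mono_on zero_le_one (hFint.const_mul s) hGint hsF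
      rw [intervalIntegral.integral_const_mul] at h1
      rw [lt_div_iff₀ hs0, mul_comm]
      exact lt_of_le_of_lt h1 hGr
    · rw [intervalIntegral.integral_undef hFint]
      positivity
  have hbdd : BddBelow {L : ℝ | ∃ γ' : ℝ → Cn n, IsCurve (D ∩ U) γ' z w ∧
      kobLength (D ∩ U) γ' = L} := by
    refine ⟨0, ?_⟩
    rintro L ⟨γ', hγ', rfl⟩
    exact intervalIntegral.integral_nonneg zero_le_one (fun u _ => kappaRoyden_nonneg _ _ _)
  have hmem : kobLength (D ∩ U) γ ∈ {L : ℝ | ∃ γ' : ℝ → Cn n, IsCurve (D ∩ U) γ' z w ∧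
      kobLength (D ∩ U) γ' = L} :=
    ⟨γ, ⟨hγC, fun t ht => ⟨hγD ht, hUU (hU₁γ ht)⟩, hγ0, hγ1⟩, rfl⟩
  calc kobayashi (D ∩ U) z w ≤ kobLength (D ∩ U) γ := csInf_le hbdd hmem
    _ = ∫ t in (0:ℝ)..1, F t := hFae
    _ < r / s := hFlt

end
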